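/- arXiv:2207.12109 — 5 statements merged into one kernel-verified Lean document; each statement's English description precedes it below -/
import Mathlib

section
/- Let m ≥ 1 be an integer, μ > 0 and r > 0 reals, λ = r·μ, and let x be an integer with 0 ≤ x < m. Then B_{m,x}(r) − B_{m,x+1}(r) > 0, and (1/λ)·(L_{m,x+1}(r) − L_{m,x}(r)) / (B_{m,x}(r) − B_{m,x+1}(r)) = 1/μ. -/
/-- `a_j(r)` coefficients of the M/M/m/n queue. -/
noncomputable def aCoef (m j : ℕ) (r : ℝ) : ℝ :=
  if j ≤ m then r ^ j / (Nat.factorial j : ℝ)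
  else (r ^ m / (Nat.factorial m : ℝ)) * (r / (m : ℝ)) ^ (j - m)

/-- Blocking probability `B_{m,n}(r)` of the M/M/m/n queue with offered load `r`. -/
noncomputable def Bmn (m n : ℕ) (r : ℝ) : ℝ :=
  aCoef m n r / ∑ j ∈ Finset.range (n + 1), aCoef m j r

/-- Mean number in system `L_{m,n}(r)` of the M/M/m/n queue with offered load `r`. -/
noncomputable def Lmn (m n : ℕ) (r : ℝ) : ℝ :=
  (∑ j ∈ Finset.range (n + 1), (j : ℝ) * aCoef m j r) /
    ∑ j ∈ Finset.range (n + 1), aCoef m j r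

/-- Erlang-B formula `B_m(r)`. -/
noncomputable def erlangB (m : ℕ) (r : ℝ) : ℝ :=
  (r ^ m / (Nat.factorial m : ℝ)) / ∑ j ∈ Finset.range (m + 1), r ^ j / (Nat.factorial j : ℝ)

/-!
Below the number of servers the coefficients satisfy `(j + 1) a_{j+1} = r a_j`, so for `n ≤ m`
`∑_{j ≤ n} j a_j = r ∑_{j < n} a_j`, which is Little's law `L_{m,n} = r (1 - B_{m,n})`.
Hence `L_{m,x+1} - L_{m,x} = r (B_{m,x} - B_{m,x+1})`, and this is positive because `L_{m,n}` is
the mean of a distribution on `{0, …, n}` and so strictly increases when the state `n + 1` is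
added with positive weight.
-/

section

variable {m : ℕ} {r : ℝ}

lemma aCoef_zero : aCoef m 0 r = 1 := by
  simp [aCoef]

lemma aCoef_nonneg (hr : 0 ≤ r) (j : ℕ) : 0 ≤ aCoef m j r := by
  unfold aCoef
  split_ifs <;> positivity

lemma aCoef_pos (hm : 0 < m) (hr : 0 < r) (j : ℕ) : 0 < aCoef m j r := by
  have : (0 : ℝ) < m := by exact_mod_cast hm
  unfold aCoef
  split_ifs <;> positivity

lemma succ_mul_aCoef_succ {j : ℕ} (hj : j < m) :
    (j + 1) * aCoef m (j + 1) r = r * aCoef m j r := by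
  simp only [aCoef, if_pos (Nat.succ_le_of_lt hj), if_pos hj.le, Nat.factorial_succ, Nat.cast_mul, Nat.cast_succ,
    pow_succ]
  field_simp

lemma sum_range_aCoef_pos (hr : 0 ≤ r) (n : ℕ) :
    0 < ∑ j ∈ Finset.range (n + 1), aCoef m j r := by
  rw [Finset.sum_range_succ']
  simpa [aCoef_zero] using add_pos_of_nonneg_of_pos
    (Finset.sum_nonneg fun j _ => aCoef_nonneg hr (j + 1)) one_pos

lemma sum_range_mul_aCoef_le (hr : 0 ≤ r) (n : ℕ) :
    ∑ j ∈ Finset.range (n + 1), (j : ℝ) * aCoef m j r ≤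
      n * ∑ j ∈ Finset.range (n + 1), aCoef m j r := by
  rw [Finset.mul_sum]
  refine Finset.sum_le_sum fun j hj => ?_
  have : (j : ℝ) ≤ n := by exact_mod_cast Finset.mem_range_succ_iff.mp hj
  exact mul_le_mul_of_nonneg_right this (aCoef_nonneg hr j)

lemma sum_range_mul_aCoef {n : ℕ} (hn : n ≤ m) :
    ∑ j ∈ Finset.range (n + 1), (j : ℝ) * aCoef m j r =
      r * ∑ j ∈ Finset.range n, aCoef m j r := by
  induction n with
  | zero => simp
  | succ k ih =>
    rw [Finset.sum_range_succ, ih (by omega), Finset.sum_range_succ, mul_add, Nat.cast_succ,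
      succ_mul_aCoef_succ hn]

theorem Lmn_eq_mul_one_sub_Bmn (hr : 0 ≤ r) {n : ℕ} (hn : n ≤ m) :
    Lmn m n r = r * (1 - Bmn m n r) := by
  have hS := (sum_range_aCoef_pos (m := m) hr n).ne'
  unfold Lmn Bmn
  rw [sum_range_mul_aCoef hn, mul_one_sub, eq_sub_iff_add_eq, ← mul_div_assoc, ← add_div,
    ← mul_add, ← Finset.sum_range_succ, mul_div_assoc, div_self hS, mul_one]

theorem Lmn_lt_Lmn_succ (hm : 0 < m) (hr : 0 < r) (n : ℕ) : Lmn m n r < Lmn m (n + 1) r := by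
  have hS := sum_range_aCoef_pos (m := m) hr.le n
  have ha := aCoef_pos hm hr (n + 1)
  have hT := sum_range_mul_aCoef_le (m := m) hr.le n
  unfold Lmn
  rw [Finset.sum_range_succ _ (n + 1), Finset.sum_range_succ _ (n + 1),
    div_lt_div_iff₀ hS (by positivity)]
  push_cast
  nlinarith

end

theorem stmt_1_general (m : ℕ) (hm : 1 ≤ m) (μ r : ℝ) (hr : 0 < r)
    (lam : ℝ) (hlam : lam = r * μ) (x : ℕ) (hx : x < m) :
    0 < Bmn m x r - Bmn m (x + 1) r ∧
    (1 / lam) * (Lmn m (x + 1) r - Lmn m x r) / (Bmn m x r - Bmn m (x + 1) r) = 1 / μ := by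
  have hdiff : Lmn m (x + 1) r - Lmn m x r = r * (Bmn m x r - Bmn m (x + 1) r) := by
    rw [Lmn_eq_mul_one_sub_Bmn hr.le hx, Lmn_eq_mul_one_sub_Bmn hr.le hx.le]
    ring
  have hpos : 0 < Bmn m x r - Bmn m (x + 1) r :=
    pos_of_mul_pos_right (hdiff ▸ sub_pos.mpr (Lmn_lt_Lmn_succ hm hr x)) hr.le
  refine ⟨hpos, ?_⟩
  rw [hdiff, hlam]
  field_simp

/-- the second-order RB index equals `1/μ` for states below `m`. -/
theorem stmt_1 (m : ℕ) (hm : 1 ≤ m) (μ r : ℝ) (hμ : 0 < μ) (hr : 0 < r)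
    (lam : ℝ) (hlam : lam = r * μ) (x : ℕ) (hx : x < m) :
    0 < Bmn m x r - Bmn m (x + 1) r ∧
    (1 / lam) * (Lmn m (x + 1) r - Lmn m x r) / (Bmn m x r - Bmn m (x + 1) r) = 1 / μ :=
  stmt_1_general m hm μ r hr lam hlam x hx
end

section
/- Let m ≥ 1 and x ≥ m be integers, μ > 0 a real, and set r = m and λ = m·μ. Then B_{m,x}(m) − B_{m,x+1}(m) > 0 and, with c = (1 − B_m(m))/(m·B_m(m)), one has (1/λ)·(L_{m,x+1}(m) − L_{m,x}(m)) / (B_{m,x}(m) − B_{m,x+1}(m)) = [ (1/2)·(x − m + 2 + 2·m·c)·(x − m + 1) + m ] / (m·μ). -/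
/-!
At `r = m` every coefficient `a_j` with `j ≥ m` equals `A = m^m/m!`, so with
`S = ∑_{j ≤ m} m^j/j!` and `x = m + k` the normaliser is `S + k A` and the numerator of `L` is
`m (S - A) + A (k m + k (k + 1) / 2)` (using `∑_{j ≤ m} j m^j/j! = m ∑_{j < m} m^j/j!`).
Both `B_{m,x}` and `L_{m,x}` are then explicit rational functions of `k`, `A`, `S`, and
`B_m(m) = A / S` turns `c` into `(S - A) / (m A)`.
-/

open Finset Nat

noncomputable def expPartialSum (n : ℕ) (r : ℝ) : ℝ :=
  ∑ j ∈ range (n + 1), r ^ j / j !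

lemma expPartialSum_pos (n : ℕ) {r : ℝ} (hr : 0 ≤ r) : 0 < expPartialSum n r :=
  sum_pos' (fun j _ => by positivity) ⟨0, by simp⟩

lemma sum_range_natCast_mul_pow_div_factorial (n : ℕ) (r : ℝ) :
    ∑ j ∈ range (n + 1), (j : ℝ) * (r ^ j / j !) = r * (expPartialSum n r - r ^ n / n !) := by
  have hterm : ∀ j : ℕ, ((j + 1 : ℕ) : ℝ) * (r ^ (j + 1) / (j + 1)!) = r * (r ^ j / j !) := by
    intro j
    rw [factorial_succ, pow_succ]
    push_cast
    field_simp
  rw [sum_range_succ', expPartialSum, sum_range_succ]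
  simp only [hterm, ← mul_sum]
  simp

lemma erlangB_eq_div_expPartialSum (m : ℕ) (r : ℝ) :
    erlangB m r = r ^ m / m ! / expPartialSum m r :=
  rfl

lemma aCoef_of_le {m j : ℕ} (r : ℝ) (h : j ≤ m) : aCoef m j r = r ^ j / j ! :=
  if_pos h

section LoadEqualsServers

variable {m : ℕ} (hm : m ≠ 0)
include hm

lemma aCoef_self_of_le {j : ℕ} (h : m ≤ j) : aCoef m j m = (m : ℝ) ^ m / m ! := by
  rcases h.eq_or_lt with rfl | hlt
  · exact aCoef_of_le _ le_rfl
  · have hm' : (m : ℝ) ≠ 0 := by exact_mod_cast hm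
    rw [aCoef, if_neg hlt.not_ge, div_self hm', one_pow, mul_one]

lemma sum_range_aCoef_self (k : ℕ) :
    ∑ j ∈ range (m + k + 1), aCoef m j m = expPartialSum m m + k * ((m : ℝ) ^ m / m !) := by
  induction k with
  | zero =>
    simp only [add_zero, CharP.cast_eq_zero, zero_mul]
    exact sum_congr rfl fun j hj => aCoef_of_le _ (Nat.lt_succ_iff.mp (mem_range.mp hj))
  | succ k ih =>
    rw [← add_assoc, sum_range_succ, ih, aCoef_self_of_le hm (by omega)]
    push_cast
    ring

lemma sum_range_mul_aCoef_self (k : ℕ) :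
    ∑ j ∈ range (m + k + 1), (j : ℝ) * aCoef m j m =
      m * (expPartialSum m m - (m : ℝ) ^ m / m !) +
        (m : ℝ) ^ m / m ! * (k * m + k * (k + 1) / 2) := by
  induction k with
  | zero =>
    simp only [add_zero, CharP.cast_eq_zero, zero_mul, zero_add, zero_div, mul_zero]
    rw [← sum_range_natCast_mul_pow_div_factorial]
    exact sum_congr rfl fun j hj => by
      rw [aCoef_of_le _ (Nat.lt_succ_iff.mp (mem_range.mp hj))]
  | succ k ih =>
    rw [← add_assoc, sum_range_succ, ih, aCoef_self_of_le hm (by omega)]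
    push_cast
    ring

lemma Bmn_self_add (k : ℕ) :
    Bmn m (m + k) m = (m : ℝ) ^ m / m ! / (expPartialSum m m + k * ((m : ℝ) ^ m / m !)) := by
  rw [Bmn, aCoef_self_of_le hm (by omega), sum_range_aCoef_self hm]

lemma Lmn_self_add (k : ℕ) :
    Lmn m (m + k) m =
      (m * (expPartialSum m m - (m : ℝ) ^ m / m !) +
          (m : ℝ) ^ m / m ! * (k * m + k * (k + 1) / 2)) /
        (expPartialSum m m + k * ((m : ℝ) ^ m / m !)) := by
  rw [Lmn, sum_range_mul_aCoef_self hm, sum_range_aCoef_self hm]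

end LoadEqualsServers

theorem stmt_3_general (m x : ℕ) (hm : 1 ≤ m) (hx : m ≤ x) (μ : ℝ)
    (lam : ℝ) (hlam : lam = (m : ℝ) * μ)
    (c : ℝ) (hc : c = (1 - erlangB m (m : ℝ)) / ((m : ℝ) * erlangB m (m : ℝ))) :
    0 < Bmn m x (m : ℝ) - Bmn m (x + 1) (m : ℝ) ∧
    (1 / lam) * (Lmn m (x + 1) (m : ℝ) - Lmn m x (m : ℝ)) /
        (Bmn m x (m : ℝ) - Bmn m (x + 1) (m : ℝ)) =
      ((1 / 2) * ((x : ℝ) - (m : ℝ) + 2 + 2 * (m : ℝ) * c) * ((x : ℝ) - (m : ℝ) + 1) + (m : ℝ)) /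
        ((m : ℝ) * μ) := by
  obtain ⟨k, rfl⟩ := Nat.exists_eq_add_of_le hx
  have hm0 : m ≠ 0 := by omega
  have hB := Bmn_self_add hm0 k
  have hB' := Bmn_self_add hm0 (k + 1)
  have hL := Lmn_self_add hm0 k
  have hL' := Lmn_self_add hm0 (k + 1)
  rw [← add_assoc] at hB' hL'
  rw [hc, erlangB_eq_div_expPartialSum, hlam, hB, hB', hL, hL']
  set A : ℝ := (m : ℝ) ^ m / (m ! : ℝ)
  set S := expPartialSum m m
  have hA : 0 < A := by positivity
  have hS : 0 < S := expPartialSum_pos m m.cast_nonneg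
  have hBdiff : A / (S + k * A) - A / (S + (k + 1 : ℕ) * A) =
      A ^ 2 / ((S + k * A) * (S + (k + 1) * A)) := by
    push_cast
    field_simp
    ring
  refine ⟨hBdiff ▸ by positivity, ?_⟩
  rw [hBdiff, mul_div_assoc, one_div_mul_eq_div]
  congr 1
  push_cast
  field_simp
  ring

/-- closed formula for the second-order RB index when `x ≥ m` and `r = m`. -/
theorem stmt_3 (m x : ℕ) (hm : 1 ≤ m) (hx : m ≤ x) (μ : ℝ) (hμ : 0 < μ)
    (r lam : ℝ) (hr : r = (m : ℝ)) (hlam : lam = (m : ℝ) * μ)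
    (c : ℝ) (hc : c = (1 - erlangB m (m : ℝ)) / ((m : ℝ) * erlangB m (m : ℝ))) :
    0 < Bmn m x (m : ℝ) - Bmn m (x + 1) (m : ℝ) ∧
    (1 / lam) * (Lmn m (x + 1) (m : ℝ) - Lmn m x (m : ℝ)) /
        (Bmn m x (m : ℝ) - Bmn m (x + 1) (m : ℝ)) =
      ((1 / 2) * ((x : ℝ) - (m : ℝ) + 2 + 2 * (m : ℝ) * c) * ((x : ℝ) - (m : ℝ) + 1) + (m : ℝ)) /
        ((m : ℝ) * μ) :=
  stmt_3_general m x hm hx μ lam hlam c hc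
end

section
/- Let K ≥ 1 be an integer, λ > 0 a real, and for each k = 1,…,K let m_k ≥ 1, n_k ≥ m_k be integers, μ_k > 0 a real, and φ_k : [0,∞) → ℝ be defined by φ_k(0) = 0 and φ_k(t) = t·B_{m_k,n_k}(t/μ_k) for t > 0; each φ_k is continuously differentiable on [0,∞). A feasible point (λ_1*,…,λ_K*), i.e., one with λ_k* ∈ [0,λ] for each k and ∑_k λ_k* = λ, minimizes ∑_{k=1}^K φ_k(λ_k) over the feasible set if and only if there exists a real y* such that for every k: φ_k'(λ_k*) ≥ y* if λ_k* = 0; φ_k'(λ_k*) = y* if 0 < λ_k* < λ; and φ_k'(λ_k*) ≤ y* if λ_k* = λ. -/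
/-!
Minimality is equivalent to the KKT conditions because the objective is separable and each
`φ k` is convex: at a minimizer, shifting mass from a coordinate `k` with `v k > 0` to a
coordinate `j` with `v j < λ` cannot lower the objective, so `D k (v k) ≤ D j (v j)`, and the
largest derivative among the positive coordinates is a multiplier; conversely, the tangent lines
of the convex `φ k` add up to a lower bound for the objective.

The convexity of `φ(t) = t B_{m,n}(t/μ)` carries the content. Writing `a_j(r) = α_j r^j`,
one has `φ t = t / ∑_{k ≤ n} x_k t^{-k}` with `x_k = (α_{n-k}/α_n) μ^k`, and `φ'' ≥ 0` reduces to
`(∑ z_k)(∑ k(k-1) z_k) ≤ 2 (∑ k z_k)^2` for `z_k = x_k t^{-k}`. This sequence is log-concave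
because `α_{j+1}/α_j = 1/min(j+1, m)` decreases. Grouping the double sum along the
antidiagonals `p + q = s` turns the inequality into Chebyshev's sum inequality: both
`z_p z_{s-p}` and the kernel `6p(s-p) - s^2 + s` increase with `p(s-p)`, and the kernel sums
to zero over the antidiagonal.
-/

open Finset

/-- For `a + b = a' + b'`, the condition `a * b < a' * b'` says that `a'` and `b'` lie strictly
between `a` and `b`. -/
def IsLogConcaveBelow (x : ℕ → ℝ) (N : ℕ) : Prop :=
  ∀ ⦃a b a' b' : ℕ⦄, a < N → b < N → a + b = a' + b' → a * b < a' * b' →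
    x a * x b ≤ x a' * x b'

lemma isLogConcaveBelow_of_mul_succ_le {x : ℕ → ℝ} {N : ℕ}
    (h : ∀ i j, i ≤ j → j + 1 < N → x i * x (j + 1) ≤ x (i + 1) * x j) :
    IsLogConcaveBelow x N := by
  have spread : ∀ d a b, a + d ≤ b → b + d < N → x a * x (b + d) ≤ x (a + d) * x b := by
    intro d
    induction d with
    | zero => simp
    | succ d ih =>
      intro a b hab hb
      calc x a * x (b + (d + 1)) = x a * x (b + 1 + d) := by ring_nf
        _ ≤ x (a + d) * x (b + 1) := ih a (b + 1) (by omega) (by omega)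
        _ ≤ x (a + (d + 1)) * x b := h (a + d) b (by omega) (by omega)
  intro a b a' b' ha hb hs hlt
  wlog hab : a ≤ b generalizing a b
  · rw [mul_comm]; exact this hb ha (by omega) (by rwa [mul_comm]) (by omega)
  wlog hab' : a' ≤ b' generalizing a' b'
  · rw [mul_comm (x a')]; exact this (by omega) (by rwa [mul_comm b']) (by omega)
  have haa' : a ≤ a' := by
    by_contra! h'
    nlinarith
  obtain ⟨d, rfl⟩ : ∃ d, a' = a + d := ⟨a' - a, by omega⟩
  obtain rfl : b = b' + d := by omega
  exact spread d a b' hab' hb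

lemma IsLogConcaveBelow.mul_pow {x : ℕ → ℝ} {N : ℕ} (hx : IsLogConcaveBelow x N) {c : ℝ}
    (hc : 0 ≤ c) : IsLogConcaveBelow (fun k => x k * c ^ k) N := by
  intro a b a' b' ha hb hs hlt
  calc x a * c ^ a * (x b * c ^ b) = x a * x b * c ^ (a + b) := by ring
    _ ≤ x a' * x b' * c ^ (a + b) :=
      mul_le_mul_of_nonneg_right (hx ha hb hs hlt) (pow_nonneg hc _)
    _ = x a' * c ^ a' * (x b' * c ^ b') := by rw [hs]; ring

lemma sum_range_antidiagonal_kernel (s : ℕ) :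
    ∑ p ∈ range (s + 1), (6 * ((p * (s - p) : ℕ) : ℝ) - (s : ℝ) ^ 2 + s) = 0 := by
  have key : ∀ n ≤ s + 1, ∑ p ∈ range n, (6 * ((p * (s - p) : ℕ) : ℝ) - (s : ℝ) ^ 2 + s)
      = 3 * s * n * (n - 1) - (n - 1) * n * (2 * n - 1) - n * ((s : ℝ) ^ 2 - s) := by
    intro n hn
    induction n with
    | zero => simp
    | succ n ih =>
      rw [sum_range_succ, ih (by omega), Nat.cast_mul, Nat.cast_sub (by omega)]
      push_cast; ring
  rw [key _ le_rfl]; push_cast; ring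

lemma sum_range_mul_antidiagonal_kernel_nonneg {y : ℕ → ℝ}
    (hy : ∀ ⦃a b a' b' : ℕ⦄, a + b = a' + b' → a * b < a' * b' → y a * y b ≤ y a' * y b')
    (s : ℕ) :
    0 ≤ ∑ p ∈ range (s + 1),
      y p * y (s - p) * (6 * ((p * (s - p) : ℕ) : ℝ) - (s : ℝ) ^ 2 + s) := by
  have hmono : MonovaryOn (fun p => y p * y (s - p))
      (fun p => 6 * ((p * (s - p) : ℕ) : ℝ) - (s : ℝ) ^ 2 + s) (range (s + 1) : Set ℕ) := by
    intro p hp q hq hlt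
    simp only [coe_range, Set.mem_Iio] at hp hq
    exact hy (by omega)
      (by exact_mod_cast (by linarith : ((p * (s - p) : ℕ) : ℝ) < (q * (s - q) : ℕ)))
  have := hmono.sum_mul_sum_le_card_mul_sum
  rw [sum_range_antidiagonal_kernel, mul_zero, card_range] at this
  exact nonneg_of_mul_nonneg_right this (by positivity)

lemma sum_mul_sum_le_two_mul_sq_of_mul_le_mul {y : ℕ → ℝ} {N : ℕ}
    (hy : ∀ ⦃a b a' b' : ℕ⦄, a + b = a' + b' → a * b < a' * b' → y a * y b ≤ y a' * y b')
    (hyN : ∀ k, N ≤ k → y k = 0) :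
    (∑ k ∈ range N, y k) * ∑ k ∈ range N, (k : ℝ) * (k - 1) * y k
      ≤ 2 * (∑ k ∈ range N, (k : ℝ) * y k) ^ 2 := by
  set F : ℕ → ℕ → ℝ := fun p q => y p * y q * (2 * p * q - q * (q - 1))
  set g : ℕ → ℕ → ℝ := fun p q =>
    y p * y q * (6 * ((p * q : ℕ) : ℝ) - ((p + q : ℕ) : ℝ) ^ 2 + (p + q : ℕ))
  have hF : ∑ p ∈ range N, ∑ q ∈ range N, F p q = 2 * (∑ k ∈ range N, (k : ℝ) * y k) ^ 2
      - (∑ k ∈ range N, y k) * ∑ k ∈ range N, (k : ℝ) * (k - 1) * y k := by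
    rw [sq, sum_mul_sum, sum_mul_sum, mul_sum, ← sum_sub_distrib]
    refine sum_congr rfl fun p _ => ?_
    rw [mul_sum, ← sum_sub_distrib]
    exact sum_congr rfl fun q _ => by ring
  have hg : ∑ p ∈ range N, ∑ q ∈ range N, g p q = 2 * ∑ p ∈ range N, ∑ q ∈ range N, F p q := by
    rw [two_mul]
    nth_rewrite 2 [sum_comm]
    rw [← sum_add_distrib]
    refine sum_congr rfl fun p _ => ?_
    rw [← sum_add_distrib]
    exact sum_congr rfl fun q _ => by simp only [F, g]; push_cast; ring
  have hg0 : ∀ p q, N ≤ p ∨ N ≤ q → g p q = 0 := by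
    rintro p q (h | h) <;> simp [g, hyN _ h]
  have hdiag : ∑ p ∈ range N, ∑ q ∈ range N, g p q
      = ∑ s ∈ range (2 * N), ∑ p ∈ range (s + 1), g p (s - p) := by
    rw [sum_range_diag_flip, ← sum_subset (range_subset_range.2 (by omega : N ≤ 2 * N))]
    · refine sum_congr rfl fun p hp => sum_subset (range_subset_range.2 ?_) fun q _ hq => ?_
      · rw [mem_range] at hp; omega
      · exact hg0 p q (.inr (by simpa using hq))
    · exact fun p _ hp => sum_eq_zero fun q _ => hg0 p q (.inl (by simpa using hp))
  have hanti : ∀ s, 0 ≤ ∑ p ∈ range (s + 1), g p (s - p) := fun s => by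
    convert sum_range_mul_antidiagonal_kernel_nonneg hy s using 2 with p hp
    simp only [g, Nat.add_sub_cancel' (Nat.lt_succ_iff.1 (mem_range.1 hp))]
  have := sum_nonneg fun s (_ : s ∈ range (2 * N)) => hanti s
  rw [← hdiag, hg, hF] at this
  linarith

theorem IsLogConcaveBelow.sum_mul_sum_le_two_mul_sq {x : ℕ → ℝ} {N : ℕ}
    (hx : IsLogConcaveBelow x N) (hx0 : ∀ k < N, 0 ≤ x k) :
    (∑ k ∈ range N, x k) * ∑ k ∈ range N, (k : ℝ) * (k - 1) * x k
      ≤ 2 * (∑ k ∈ range N, (k : ℝ) * x k) ^ 2 := by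
  -- the kernel sums to zero only over full antidiagonals, so `x` is extended by zero
  set y : ℕ → ℝ := fun k => if k < N then x k else 0
  have hy0 : ∀ k, 0 ≤ y k := fun k => by
    by_cases hk : k < N
    · simpa [y, hk] using hx0 k hk
    · simp [y, hk]
  have hy : ∀ ⦃a b a' b' : ℕ⦄, a + b = a' + b' → a * b < a' * b' → y a * y b ≤ y a' * y b' := by
    intro a b a' b' hs hlt
    by_cases hab : a < N ∧ b < N
    · have ha' : a' < N := by
        by_contra! h
        nlinarith [Nat.mul_le_mul (by omega : a ≤ a') (by omega : b ≤ a')]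
      have hb' : b' < N := by by_contra! h; nlinarith
      simpa [y, hab, ha', hb'] using hx hab.1 hab.2 hs hlt
    · have : y a * y b = 0 := by
        rcases not_and_or.1 hab with h | h <;> simp [y, h]
      rw [this]; exact mul_nonneg (hy0 _) (hy0 _)
  have hxy : ∀ g : ℕ → ℝ, ∑ k ∈ range N, g k * x k = ∑ k ∈ range N, g k * y k :=
    fun g => sum_congr rfl fun k hk => by simp [y, mem_range.1 hk]
  have h1 := hxy fun _ => 1
  simp only [one_mul] at h1
  rw [h1, hxy, hxy]
  exact sum_mul_sum_le_two_mul_sq_of_mul_le_mul hy fun k hk => by simp [y, Nat.not_lt.2 hk]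

noncomputable def moment (x : ℕ → ℝ) (N i : ℕ) (t : ℝ) : ℝ :=
  ∑ k ∈ range N, (k : ℝ) ^ i * x k * t⁻¹ ^ k

lemma hasDerivAt_moment (x : ℕ → ℝ) (N i : ℕ) {t : ℝ} (ht : t ≠ 0) :
    HasDerivAt (moment x N i) (-(moment x N (i + 1) t / t)) t := by
  have hterm : ∀ k : ℕ, HasDerivAt (fun t : ℝ => t⁻¹ ^ k) (-(k * t⁻¹ ^ k / t)) t := fun k => by
    refine ((hasDerivAt_inv ht).fun_pow k).congr_deriv ?_
    rcases k with _ | k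
    · simp
    · rw [Nat.add_sub_cancel]; push_cast; ring
  refine (HasDerivAt.fun_sum fun k (_ : k ∈ range N) =>
    (hterm k).const_mul ((k : ℝ) ^ i * x k)).congr_deriv ?_
  rw [moment, sum_div, ← sum_neg_distrib]
  exact sum_congr rfl fun k _ => by ring

lemma moment_zero_pos {x : ℕ → ℝ} {N : ℕ} (hN : 0 < N) (hx : ∀ k < N, 0 < x k) {t : ℝ}
    (ht : 0 < t) : 0 < moment x N 0 t :=
  sum_pos (fun k hk => by have := hx k (mem_range.1 hk); positivity) ⟨0, mem_range.2 hN⟩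

lemma moment_zero_mul_moment_two_le {x : ℕ → ℝ} {N : ℕ} (hx : IsLogConcaveBelow x N)
    (hx0 : ∀ k < N, 0 ≤ x k) {t : ℝ} (ht : 0 ≤ t) :
    moment x N 0 t * moment x N 2 t
      ≤ moment x N 0 t * moment x N 1 t + 2 * moment x N 1 t ^ 2 := by
  have key := (hx.mul_pow (inv_nonneg.2 ht)).sum_mul_sum_le_two_mul_sq fun k hk => by
    have := hx0 k hk; positivity
  have h0 : moment x N 0 t = ∑ k ∈ range N, x k * t⁻¹ ^ k := by simp [moment]
  have h1 : moment x N 1 t = ∑ k ∈ range N, (k : ℝ) * (x k * t⁻¹ ^ k) := by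
    simp [moment, mul_assoc]
  have h2 : moment x N 2 t
      = ∑ k ∈ range N, (k : ℝ) * (k - 1) * (x k * t⁻¹ ^ k) + moment x N 1 t := by
    rw [h1, moment, ← sum_add_distrib]
    exact sum_congr rfl fun k _ => by ring
  rw [h2, mul_add, h0, h1]
  linarith

theorem convexOn_Ici_of_eq_div_moment {f : ℝ → ℝ} {x : ℕ → ℝ} {N : ℕ} (hN : 0 < N)
    (hx : ∀ k < N, 0 < x k) (hlc : IsLogConcaveBelow x N) (hf : ContinuousOn f (Set.Ici 0))
    (hfeq : ∀ t, 0 < t → f t = t / moment x N 0 t) : ConvexOn ℝ (Set.Ici 0) f := by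
  set M : ℕ → ℝ → ℝ := moment x N
  have hM : ∀ i, ∀ t ∈ Set.Ioi (0 : ℝ), HasDerivAt (M i) (-(M (i + 1) t / t)) t :=
    fun i t ht => hasDerivAt_moment x N i (ne_of_gt ht)
  have hM0 : ∀ t ∈ Set.Ioi (0 : ℝ), M 0 t ≠ 0 := fun t ht => (moment_zero_pos hN hx ht).ne'
  refine convexOn_of_hasDerivWithinAt2_nonneg (convex_Ici 0) hf
    (f' := fun t => (M 0 t + M 1 t) / M 0 t ^ 2)
    (f'' := fun t => (2 * M 1 t ^ 2 + M 0 t * M 1 t - M 0 t * M 2 t) / (t * M 0 t ^ 3))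
    ?_ ?_ ?_ <;> rw [interior_Ici] <;> intro t ht
  · refine HasDerivAt.hasDerivWithinAt ?_ |>.congr (fun s hs => hfeq s hs) (hfeq t ht)
    refine ((hasDerivAt_id' t).fun_div (hM 0 t ht) (hM0 t ht)).congr_deriv ?_
    field_simp [ne_of_gt (show (0 : ℝ) < t from ht)]
    ring
  · refine HasDerivAt.hasDerivWithinAt ?_
    refine (((hM 0 t ht).fun_add (hM 1 t ht)).fun_div ((hM 0 t ht).fun_pow 2)
      (pow_ne_zero 2 (hM0 t ht))).congr_deriv ?_
    field_simp [ne_of_gt (show (0 : ℝ) < t from ht), hM0 t ht]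
    ring
  · have := moment_zero_mul_moment_two_le hlc (fun k hk => (hx k hk).le) (le_of_lt ht)
    have := moment_zero_pos hN hx ht
    have : (0 : ℝ) < t := ht
    apply div_nonneg <;> [linarith; positivity]

lemma aCoef_eq_mul_pow (m j : ℕ) (r : ℝ) : aCoef m j r = aCoef m j 1 * r ^ j := by
  unfold aCoef
  split_ifs with h
  · ring
  · rw [div_pow, div_pow, ← pow_mul_pow_sub r (by omega : m ≤ j)]
    ring

lemma aCoef_one_succ {m : ℕ} (hm : 1 ≤ m) (j : ℕ) :
    aCoef m (j + 1) 1 = aCoef m j 1 / (min (j + 1) m : ℕ) := by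
  unfold aCoef
  rcases lt_or_ge j m with h | h
  · rw [if_pos (Nat.succ_le_of_lt h), if_pos h.le, min_eq_left (Nat.succ_le_of_lt h),
      Nat.factorial_succ]
    push_cast
    rw [one_pow, one_pow, div_div, mul_comm]
  · rw [if_neg (by omega), min_eq_right (by omega), Nat.succ_sub h]
    split_ifs with h'
    · obtain rfl : j = m := le_antisymm h' h
      simp [div_eq_mul_inv]
    · rw [pow_succ]; ring

lemma aCoef_one_pos {m : ℕ} (hm : 1 ≤ m) (j : ℕ) : 0 < aCoef m j 1 := by
  induction j with
  | zero => simp [aCoef]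
  | succ j ih =>
    rw [aCoef_one_succ hm]
    exact div_pos ih (by exact_mod_cast lt_min (Nat.succ_pos j) hm)

lemma aCoef_one_succ_mul_le {m : ℕ} (hm : 1 ≤ m) {p q : ℕ} (hqp : q ≤ p) :
    aCoef m (p + 1) 1 * aCoef m q 1 ≤ aCoef m p 1 * aCoef m (q + 1) 1 := by
  have := aCoef_one_pos hm p
  have := aCoef_one_pos hm q
  rw [aCoef_one_succ hm, aCoef_one_succ hm, div_mul_eq_mul_div, mul_div_assoc']
  exact div_le_div_of_nonneg_left (by positivity) (by exact_mod_cast lt_min q.succ_pos hm)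
    (by exact_mod_cast min_le_min_right m (Nat.succ_le_succ hqp))

noncomputable def queueWeight (m n k : ℕ) : ℝ := aCoef m (n - k) 1 / aCoef m n 1

lemma isLogConcaveBelow_queueWeight {m : ℕ} (hm : 1 ≤ m) (n : ℕ) :
    IsLogConcaveBelow (queueWeight m n) (n + 1) := by
  refine isLogConcaveBelow_of_mul_succ_le fun i j hij hj => ?_
  obtain ⟨p, hp⟩ : ∃ p, n - i = p + 1 := ⟨n - i - 1, by omega⟩
  obtain ⟨q, hq⟩ : ∃ q, n - (j + 1) = q := ⟨_, rfl⟩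
  have h1 : n - (i + 1) = p := by omega
  have h2 : n - j = q + 1 := by omega
  simp only [queueWeight, div_mul_div_comm, hp, hq, h1, h2]
  exact div_le_div_of_nonneg_right (aCoef_one_succ_mul_le hm (by omega)) (mul_self_nonneg _)

lemma mul_Bmn_div_eq_div_moment {m : ℕ} (hm : 1 ≤ m) (n : ℕ) {μ t : ℝ} (hμ : 0 < μ)
    (ht : 0 < t) :
    t * Bmn m n (t / μ) = t / moment (fun k => queueWeight m n k * μ ^ k) (n + 1) 0 t := by
  have hα := aCoef_one_pos hm n
  have hsum : ∑ j ∈ range (n + 1), aCoef m j (t / μ)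
      = aCoef m n (t / μ) * moment (fun k => queueWeight m n k * μ ^ k) (n + 1) 0 t := by
    rw [← sum_range_reflect, moment, mul_sum]
    refine sum_congr rfl fun k hk => ?_
    have hkn : k ≤ n := Nat.lt_succ_iff.1 (mem_range.1 hk)
    rw [Nat.add_sub_cancel, aCoef_eq_mul_pow, aCoef_eq_mul_pow m n, queueWeight,
      ← pow_mul_pow_sub (t / μ) hkn, div_pow, div_pow, inv_pow]
    field_simp
  rw [Bmn, hsum, div_mul_eq_div_div, div_self (by rw [aCoef_eq_mul_pow]; positivity), mul_one_div]

theorem convexOn_Ici_of_eq_mul_Bmn {m n : ℕ} (hm : 1 ≤ m) {μ : ℝ} (hμ : 0 < μ) {φ : ℝ → ℝ}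
    (hφ : ∀ t, 0 < t → φ t = t * Bmn m n (t / μ)) (hcont : ContinuousOn φ (Set.Ici 0)) :
    ConvexOn ℝ (Set.Ici 0) φ :=
  convexOn_Ici_of_eq_div_moment n.succ_pos
    (fun k _ => mul_pos (div_pos (aCoef_one_pos hm _) (aCoef_one_pos hm n)) (pow_pos hμ k))
    ((isLogConcaveBelow_queueWeight hm n).mul_pow hμ.le) hcont
    fun t ht => (hφ t ht).trans (mul_Bmn_div_eq_div_moment hm n hμ ht)

lemma ConvexOn.deriv_mul_sub_le {S : Set ℝ} {f : ℝ → ℝ} {x y d : ℝ} (hf : ConvexOn ℝ S f)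
    (hx : x ∈ S) (hy : y ∈ S) (hd : HasDerivWithinAt f d S x) : d * (y - x) ≤ f y - f x := by
  rcases lt_trichotomy x y with hxy | rfl | hxy
  · have := hf.le_slope_of_hasDerivWithinAt hx hy hxy hd
    rwa [slope_def_field, le_div_iff₀ (sub_pos.2 hxy)] at this
  · simp
  · have := hf.slope_le_of_hasDerivWithinAt hy hx hxy hd
    rw [slope_def_field, div_le_iff₀ (sub_pos.2 hxy)] at this
    linarith

section Allocation

variable {ι : Type*} [Fintype ι]

def allocations (ι : Type*) [Fintype ι] (lam : ℝ) : Set (ι → ℝ) :=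
  {w | (∀ k, w k ∈ Set.Icc 0 lam) ∧ ∑ k, w k = lam}

lemma convex_allocations (lam : ℝ) : Convex ℝ (allocations ι lam) := by
  rintro v ⟨hv, hvs⟩ w ⟨hw, hws⟩ a b ha hb hab
  refine ⟨fun k => convex_Icc 0 lam (hv k) (hw k) ha hb hab, ?_⟩
  simp [sum_add_distrib, ← mul_sum, hvs, hws, ← add_mul, hab]

theorem isMinOn_iff_sum_deriv_mul_sub_nonneg {φ D : ι → ℝ → ℝ}
    (hconv : ∀ k, ConvexOn ℝ (Set.Ici 0) (φ k))
    (hD : ∀ k, ∀ t ∈ Set.Ici (0 : ℝ), HasDerivWithinAt (φ k) (D k t) (Set.Ici 0) t)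
    {C : Set (ι → ℝ)} (hC : Convex ℝ C) (hC0 : ∀ w ∈ C, ∀ k, 0 ≤ w k) {v : ι → ℝ}
    (hv : v ∈ C) :
    IsMinOn (fun w => ∑ k, φ k (w k)) C v ↔ ∀ w ∈ C, 0 ≤ ∑ k, D k (v k) * (w k - v k) := by
  constructor
  · intro hmin w hw
    have hF := HasFDerivWithinAt.fun_sum (u := univ) (x := v) (s := C)
      (A := fun k w => φ k (w k)) fun k _ =>
        (hD k (v k) (hC0 v hv k)).comp_hasFDerivWithinAt v
          (ContinuousLinearMap.proj (R := ℝ) (φ := fun _ : ι => ℝ) k).hasFDerivWithinAt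
          fun w hw => hC0 w hw k
    have := hmin.localize.hasFDerivWithinAt_nonneg hF
      (sub_mem_posTangentConeAt_of_segment_subset (hC.segment_subset hv hw))
    simpa [mul_comm] using this
  · refine fun h => isMinOn_iff.2 fun w hw => ?_
    have := sum_le_sum fun k (_ : k ∈ univ) => (hconv k).deriv_mul_sub_le
      (hC0 v hv k) (hC0 w hw k) (hD k (v k) (hC0 v hv k))
    rw [sum_sub_distrib] at this
    linarith [h w hw]

lemma le_of_sum_mul_sub_nonneg {lam : ℝ} {v d : ι → ℝ} (hv : v ∈ allocations ι lam)
    (hd : ∀ w ∈ allocations ι lam, 0 ≤ ∑ i, d i * (w i - v i))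
    {j k : ι} (hjk : j ≠ k) (hk : 0 < v k) (hj : v j < lam) : d k ≤ d j := by
  classical
  obtain ⟨δ, hδ, hδk, hδj⟩ : ∃ δ : ℝ, 0 < δ ∧ δ ≤ v k ∧ δ ≤ lam - v j :=
    ⟨_, lt_min hk (sub_pos.2 hj), min_le_left _ _, min_le_right _ _⟩
  set e : ι → ℝ := Pi.single j 1 - Pi.single k 1
  have hw : v + δ • e ∈ allocations ι lam := by
    refine ⟨fun i => ?_, by simp [e, sum_add_distrib, ← mul_sum, hv.2]⟩
    obtain ⟨h0, hlam⟩ := hv.1 i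
    change v i + δ * e i ∈ Set.Icc 0 lam
    rcases eq_or_ne i j with rfl | hij
    · rw [show e i = 1 by simp [e, hjk]]; constructor <;> linarith
    rcases eq_or_ne i k with rfl | hik
    · rw [show e i = -1 by simp [e, hij]]; constructor <;> linarith
    · rw [show e i = 0 by simp [e, hij, hik], mul_zero, add_zero]; exact hv.1 i
  have hsum : ∑ i, d i * ((v + δ • e) i - v i) = δ * (d j - d k) := by
    simp [e, mul_sub, sum_sub_distrib, Pi.single_apply, mul_comm]
  have := hd _ hw
  rw [hsum] at this
  linarith [(mul_nonneg_iff_of_pos_left hδ).1 this]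

lemma exists_multiplier_of_le {lam : ℝ} (hlam : 0 < lam) {v d : ι → ℝ} (hv : ∑ k, v k = lam)
    (hd : ∀ j k, j ≠ k → 0 < v k → v j < lam → d k ≤ d j) :
    ∃ y : ℝ, ∀ k, (v k = 0 → y ≤ d k) ∧ (0 < v k → v k < lam → d k = y) ∧
      (v k = lam → d k ≤ y) := by
  obtain ⟨k₁, -, hk₁⟩ :=
    exists_lt_of_sum_lt (s := univ) (f := 0) (g := v) (by simpa [hv] using hlam)
  obtain ⟨k₀, hk₀, hmax⟩ :=
    (univ.filter fun k => 0 < v k).exists_max_image d ⟨k₁, by simpa using hk₁⟩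
  rw [mem_filter] at hk₀
  have hmax' : ∀ k, 0 < v k → d k ≤ d k₀ := fun k hk => hmax k (by simpa using hk)
  refine ⟨d k₀, fun k => ⟨fun h0 => ?_, fun hk hklam => ?_, fun hklam => hmax' k (hklam ▸ hlam)⟩⟩
  · exact hd k k₀ (by rintro rfl; linarith [hk₀.2]) hk₀.2 (h0 ▸ hlam)
  · refine le_antisymm (hmax' k hk) ?_
    rcases eq_or_ne k k₀ with rfl | hne
    · rfl
    · exact hd k k₀ hne hk₀.2 hklam

lemma sum_mul_sub_nonneg_of_multiplier {lam : ℝ} {v w d : ι → ℝ} (hv : v ∈ allocations ι lam)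
    (hw : w ∈ allocations ι lam) {y : ℝ}
    (hy : ∀ k, (v k = 0 → y ≤ d k) ∧ (0 < v k → v k < lam → d k = y) ∧ (v k = lam → d k ≤ y)) :
    0 ≤ ∑ k, d k * (w k - v k) := by
  have hk : ∀ k, y * (w k - v k) ≤ d k * (w k - v k) := fun k => by
    obtain ⟨hv0, hvlam⟩ := hv.1 k
    obtain ⟨hw0, hwlam⟩ := hw.1 k
    obtain ⟨h0, hint, hlam⟩ := hy k
    rcases hv0.eq_or_lt with h | hpos
    · nlinarith [h0 h.symm]
    rcases hvlam.lt_or_eq with hlt | h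
    · rw [hint hpos hlt]
    · nlinarith [hlam h]
  calc (0 : ℝ) = ∑ k, y * (w k - v k) := by
        rw [← mul_sum, sum_sub_distrib, hv.2, hw.2, sub_self, mul_zero]
    _ ≤ ∑ k, d k * (w k - v k) := sum_le_sum fun k _ => hk k

theorem sum_mul_sub_nonneg_iff_exists_multiplier {lam : ℝ} (hlam : 0 < lam) {v d : ι → ℝ}
    (hv : v ∈ allocations ι lam) :
    (∀ w ∈ allocations ι lam, 0 ≤ ∑ k, d k * (w k - v k)) ↔
      ∃ y : ℝ, ∀ k, (v k = 0 → y ≤ d k) ∧ (0 < v k → v k < lam → d k = y) ∧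
        (v k = lam → d k ≤ y) :=
  ⟨fun h => exists_multiplier_of_le hlam hv.2 fun _ _ hjk hk hj =>
      le_of_sum_mul_sub_nonneg hv h hjk hk hj,
    fun ⟨_, hy⟩ _ hw => sum_mul_sub_nonneg_of_multiplier hv hw hy⟩

end Allocation

theorem stmt_6_general (K : ℕ) (lam : ℝ) (hlam : 0 < lam)
    (m n : Fin K → ℕ) (μ : Fin K → ℝ)
    (hm : ∀ k, 1 ≤ m k) (hμ : ∀ k, 0 < μ k)
    (φ : Fin K → ℝ → ℝ)
    (hφ : ∀ k, ∀ t : ℝ, 0 < t → φ k t = t * Bmn (m k) (n k) (t / μ k))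
    -- each `φ k` is continuously differentiable on `[0,∞)`, with derivative `D k`
    (D : Fin K → ℝ → ℝ)
    (hD : ∀ k, ∀ t ∈ Set.Ici (0 : ℝ), HasDerivWithinAt (φ k) (D k t) (Set.Ici (0 : ℝ)) t)
    -- a feasible point
    (v : Fin K → ℝ) (hv : (∀ k, v k ∈ Set.Icc (0 : ℝ) lam) ∧ ∑ k, v k = lam) :
    (∀ w : Fin K → ℝ, ((∀ k, w k ∈ Set.Icc (0 : ℝ) lam) ∧ ∑ k, w k = lam) →
        ∑ k, φ k (v k) ≤ ∑ k, φ k (w k)) ↔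
      ∃ y : ℝ, ∀ k,
        (v k = 0 → y ≤ D k (v k)) ∧
        (0 < v k → v k < lam → D k (v k) = y) ∧
        (v k = lam → D k (v k) ≤ y) := by
  have hconv : ∀ k, ConvexOn ℝ (Set.Ici 0) (φ k) := fun k =>
    convexOn_Ici_of_eq_mul_Bmn (hm k) (hμ k) (hφ k) fun t ht => (hD k t ht).continuousWithinAt
  have hmin := isMinOn_iff_sum_deriv_mul_sub_nonneg hconv hD (convex_allocations lam)
    (fun w hw k => (hw.1 k).1) hv
  exact isMinOn_iff.symm.trans (hmin.trans (sum_mul_sub_nonneg_iff_exists_multiplier hlam hv))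

/-- KKT characterization of minimizers of the OBS nonlinear program. -/
theorem stmt_6 (K : ℕ) (hK : 1 ≤ K) (lam : ℝ) (hlam : 0 < lam)
    (m n : Fin K → ℕ) (μ : Fin K → ℝ)
    (hm : ∀ k, 1 ≤ m k) (hn : ∀ k, m k ≤ n k) (hμ : ∀ k, 0 < μ k)
    (φ : Fin K → ℝ → ℝ) (hφ0 : ∀ k, φ k 0 = 0)
    (hφ : ∀ k, ∀ t : ℝ, 0 < t → φ k t = t * Bmn (m k) (n k) (t / μ k))
    -- each `φ k` is continuously differentiable on `[0,∞)`, with derivative `D k`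
    (D : Fin K → ℝ → ℝ)
    (hD : ∀ k, ∀ t ∈ Set.Ici (0 : ℝ), HasDerivWithinAt (φ k) (D k t) (Set.Ici (0 : ℝ)) t)
    (hDcont : ∀ k, ContinuousOn (D k) (Set.Ici (0 : ℝ)))
    -- a feasible point
    (v : Fin K → ℝ) (hv : (∀ k, v k ∈ Set.Icc (0 : ℝ) lam) ∧ ∑ k, v k = lam) :
    (∀ w : Fin K → ℝ, ((∀ k, w k ∈ Set.Icc (0 : ℝ) lam) ∧ ∑ k, w k = lam) →
        ∑ k, φ k (v k) ≤ ∑ k, φ k (w k)) ↔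
      ∃ y : ℝ, ∀ k,
        (v k = 0 → y ≤ D k (v k)) ∧
        (0 < v k → v k < lam → D k (v k) = y) ∧
        (v k = lam → D k (v k) ≤ y) :=
  stmt_6_general K lam hlam m n μ hm hμ φ hφ D hD v hv
end

section
/- Let K ≥ 1 be an integer, λ > 0 a real, m ≥ 1 and n > m integers, and μ_1,…,μ_K > 0 reals. Let (λ_1*,…,λ_K*) be the unique minimizer of ∑_{k=1}^K φ_k(λ_k) over vectors with λ_k ∈ [0,λ] and ∑_k λ_k = λ, where φ_k(0) = 0 and φ_k(t) = t·B_{m,n}(t/μ_k) for t > 0, and set r_k* = λ_k*/μ_k, ρ_k* = r_k*/m. Then for every integer x with 0 ≤ x < n and all k, l ∈ {1,…,K}, the PI routing indices coincide: θ_k^{PI}(x) = θ_l^{PI}(x). In particular, the PI index policy reduces to the shortest-queue routing rule. -/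
open Classical in
/-- PI routing index `θ_k^{PI}(x)` for a queue with `m` servers, buffer size `n`,
and offered load `r`. -/
noncomputable def piIndex (m n : ℕ) (r : ℝ) (x : ℕ) : ℝ :=
  if x ≤ m then Bmn m n r / erlangB x r
  else if r / (m : ℝ) = 1 then Bmn m n r * ((x : ℝ) - (m : ℝ) + 1 / erlangB m r)
  else Bmn m n r *
      (1 - r / (m : ℝ) + (r / (m : ℝ)) * (1 - (r / (m : ℝ)) ^ (x - m)) * erlangB m r) /
    ((r / (m : ℝ)) ^ (x - m) * (1 - r / (m : ℝ)) * erlangB m r)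

/-!
The loss rate `g(r) = r * B_{m,n}(r) = c_n r^(n+1) / Σ_{j ≤ n} c_j r^j` of an M/M/m/n queue is
convex on `[0, ∞)`, because the coefficients `c_j` of `a_j(r) = c_j r^j` are log-concave. Indeed,
`x^2` times the numerator of `g''` is `c_n x^(n+1)` times a quadratic form in the `c_j x^j`; on each
antidiagonal `j + k = s` its coefficients have nonnegative sums over every centred window, while
`c_j c_(s-j)` is symmetric and increases towards the centre, so Abel summation makes each antidiagonal
nonnegative.

Since `φ_k(t) = μ_k g(t / μ_k)`, Jensen's inequality shows that routing in proportion to the `μ_k`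
minimizes `Σ φ_k`. By uniqueness this is the optimal allocation, so every queue carries the same
offered load `r_k* = λ / Σ μ` and therefore has the same PI index.
-/

open Finset

-- Abel summation: split off `q lo` times the outer window and recurse on the inner one.
theorem sum_Icc_mul_nonneg_of_unimodal {w q : ℕ → ℝ} {s lo : ℕ}
    (hw : ∀ a, lo ≤ a → 0 ≤ ∑ j ∈ Icc a (s - a), w j)
    (hq : 2 * lo ≤ s → 0 ≤ q lo)
    (hq_symm : ∀ j, lo ≤ j → 2 * j ≤ s → q (s - j) = q j)
    (hq_mono : ∀ j, lo ≤ j → 2 * j + 2 ≤ s → q j ≤ q (j + 1)) :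
    0 ≤ ∑ j ∈ Icc lo (s - lo), w j * q j := by
  by_cases hlo : 2 * lo ≤ s
  · have hinner : ∑ j ∈ Icc lo (s - lo), w j * (q j - q lo)
        = ∑ j ∈ Icc (lo + 1) (s - (lo + 1)), w j * (q j - q lo) := by
      refine (sum_subset (Icc_subset_Icc (by omega) (by omega)) fun j hj hj' ↦ ?_).symm
      simp only [mem_Icc] at hj hj'
      obtain rfl | rfl : j = lo ∨ j = s - lo := by omega
      · simp
      · simp [hq_symm lo le_rfl hlo]
    have hrec : 0 ≤ ∑ j ∈ Icc (lo + 1) (s - (lo + 1)), w j * (q j - q lo) :=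
      sum_Icc_mul_nonneg_of_unimodal (fun a ha ↦ hw a (by omega))
        (fun h ↦ sub_nonneg.2 (hq_mono lo le_rfl (by omega)))
        (fun j hj hjs ↦ by rw [hq_symm j (by omega) hjs])
        (fun j hj hjs ↦ sub_le_sub_right (hq_mono j (by omega) hjs) _)
    calc (0 : ℝ) ≤ q lo * ∑ j ∈ Icc lo (s - lo), w j + ∑ j ∈ Icc lo (s - lo), w j * (q j - q lo) :=
          add_nonneg (mul_nonneg (hq hlo) (hw lo le_rfl)) (hinner ▸ hrec)
      _ = ∑ j ∈ Icc lo (s - lo), w j * q j := by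
          rw [mul_sum, ← sum_add_distrib]; exact sum_congr rfl fun j _ ↦ by ring
  · rw [Icc_eq_empty (by omega), sum_empty]
termination_by s + 1 - lo

-- The coefficient of `c_j c_k x^(j+k)`, for `s = j + k`, in `x^2 ((P''Q - PQ'')Q - 2Q'(P'Q - PQ'))`
-- divided by `P = c_N x^(N+1)`, where `Q = Σ_{j ≤ N} c_j x^j`.
noncomputable def curvatureWeight (N s j : ℕ) : ℝ :=
  N * (N + 1) - s * (s + 2 * N + 1) + (4 * s + 2 * N + 1) * j - 3 * j ^ 2

theorem sum_range_curvatureWeight (N s i : ℕ) :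
    ∑ j ∈ range i, curvatureWeight N s j
      = i * (N * (N + 1) - s * (s + 2 * N + 1)) + (4 * s + 2 * N + 1) * i * (i - 1) / 2
        - i * (i - 1) * (2 * i - 1) / 2 := by
  induction i with
  | zero => simp
  | succ i ih => rw [sum_range_succ, ih, curvatureWeight]; push_cast; ring

theorem sum_Icc_curvatureWeight {N s b : ℕ} (hb : 2 * b ≤ s) :
    ∑ j ∈ Icc b (s - b), curvatureWeight N s j
      = (s - 2 * b + 1) * (N + b - s) * (N + 1 - b) := by
  rw [← Ico_add_one_right_eq_Icc, sum_Ico_eq_sub _ (by omega), sum_range_curvatureWeight,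
    sum_range_curvatureWeight, Nat.cast_add, Nat.cast_sub (by omega)]
  ring

theorem sum_Icc_curvatureWeight_nonneg {N s b : ℕ} (hb : s ≤ N + b) :
    0 ≤ ∑ j ∈ Icc b (s - b), curvatureWeight N s j := by
  by_cases hbs : 2 * b ≤ s
  · rw [sum_Icc_curvatureWeight hbs]
    have h1 : (2 * b : ℝ) ≤ s := by exact_mod_cast hbs
    have h2 : (s : ℝ) ≤ N + b := by exact_mod_cast hb
    have h3 : (b : ℝ) ≤ N := by linarith
    exact mul_nonneg (mul_nonneg (by linarith) (by linarith)) (by linarith)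
  · rw [Icc_eq_empty (by omega), sum_empty]

theorem convexOn_div_of_hasDerivAt {D : Set ℝ} (hD : Convex ℝ D) {P Q P' Q' P'' Q'' : ℝ → ℝ}
    (hP : ∀ x, HasDerivAt P (P' x) x) (hP' : ∀ x, HasDerivAt P' (P'' x) x)
    (hQ : ∀ x, HasDerivAt Q (Q' x) x) (hQ' : ∀ x, HasDerivAt Q' (Q'' x) x)
    (hQ_pos : ∀ x ∈ D, 0 < Q x)
    (h : ∀ x ∈ interior D,
      0 ≤ (P'' x * Q x - P x * Q'' x) * Q x - 2 * Q' x * (P' x * Q x - P x * Q' x)) :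
    ConvexOn ℝ D fun x ↦ P x / Q x := by
  have hQ_ne : ∀ x ∈ interior D, Q x ≠ 0 := fun x hx ↦ (hQ_pos x (interior_subset hx)).ne'
  refine convexOn_of_hasDerivWithinAt2_nonneg hD
    (f' := fun x ↦ (P' x * Q x - P x * Q' x) / Q x ^ 2)
    (f'' := fun x ↦ ((P'' x * Q x - P x * Q'' x) * Q x - 2 * Q' x * (P' x * Q x - P x * Q' x))
      / Q x ^ 3)
    (fun x hx ↦ ((hP x).continuousAt.div (hQ x).continuousAt (hQ_pos x hx).ne').continuousWithinAt)
    (fun x hx ↦ ((hP x).div (hQ x) (hQ_ne x hx)).hasDerivWithinAt)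
    (fun x hx ↦ ?_) (fun x hx ↦ div_nonneg (h x hx) (pow_pos (hQ_pos x (interior_subset hx)) 3).le)
  refine ((((hP' x).mul (hQ x)).sub ((hP x).mul (hQ' x))).div ((hQ x).pow 2)
    (pow_ne_zero 2 (hQ_ne x hx))).hasDerivWithinAt.congr_deriv ?_
  simp only [Pi.mul_apply, Pi.sub_apply, Pi.pow_apply]
  field_simp [hQ_ne x hx]
  ring

noncomputable def powSum (N : ℕ) (c : ℕ → ℝ) (x : ℝ) : ℝ := ∑ j ∈ range (N + 1), c j * x ^ j

theorem mul_mul_natCast_mul_pow_sub_one (a x : ℝ) (j : ℕ) :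
    x * (a * (j * x ^ (j - 1))) = j * (a * x ^ j) := by
  rcases j with _ | j
  · simp
  · rw [Nat.add_sub_cancel, pow_succ]; ring

theorem sq_mul_mul_natCast_mul_pow_sub_two (a x : ℝ) (j : ℕ) :
    x ^ 2 * (a * (j * ((j - 1 : ℕ) * x ^ (j - 1 - 1)))) = j * (j - 1) * (a * x ^ j) := by
  rcases j with _ | _ | j
  · simp
  · simp
  · simp only [Nat.add_sub_cancel, Nat.cast_add, Nat.cast_one]; ring

theorem sum_curvatureWeight_mul_pow_eq (N : ℕ) (c : ℕ → ℝ) (x : ℝ) :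
    ∑ p ∈ range (N + 1) ×ˢ range (N + 1),
        curvatureWeight N (p.1 + p.2) p.1 * (c p.1 * c p.2) * x ^ (p.1 + p.2)
      = N * (N + 1) * (powSum N c x * powSum N c x)
        - powSum N c x * ∑ k ∈ range (N + 1), k * (k - 1) * (c k * x ^ k)
        - 2 * (N + 1) * (powSum N c x * ∑ k ∈ range (N + 1), k * (c k * x ^ k))
        + 2 * ((∑ j ∈ range (N + 1), j * (c j * x ^ j)) * ∑ k ∈ range (N + 1), k * (c k * x ^ k)) := by
  simp only [powSum, sum_product]
  rw [sum_mul_sum, sum_mul_sum, sum_mul_sum, sum_mul_sum]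
  simp only [mul_sum, ← sum_sub_distrib, ← sum_add_distrib]
  refine sum_congr rfl fun j _ ↦ sum_congr rfl fun k _ ↦ ?_
  rw [curvatureWeight, pow_add]
  push_cast
  ring

section LogConcave

variable {N : ℕ} {c : ℕ → ℝ}

theorem sum_Icc_curvatureWeight_mul_nonneg (hc : ∀ j ≤ N, 0 < c j)
    (hlc : ∀ j k, j ≤ k → k + 1 ≤ N → c j * c (k + 1) ≤ c (j + 1) * c k) (s : ℕ) :
    0 ≤ ∑ j ∈ Icc (s - N) (s - (s - N)), curvatureWeight N s j * (c j * c (s - j)) := by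
  refine sum_Icc_mul_nonneg_of_unimodal (fun a ha ↦ sum_Icc_curvatureWeight_nonneg (by omega))
    (fun h ↦ (mul_pos (hc _ (by omega)) (hc _ (by omega))).le)
    (fun j _ hj ↦ by rw [Nat.sub_sub_self (by omega), mul_comm])
    (fun j hj hjs ↦ ?_)
  have h := hlc j (s - j - 1) (by omega) (by omega)
  rwa [Nat.sub_add_cancel (by omega), ← Nat.sub_add_eq] at h

theorem sum_curvatureWeight_mul_pow_nonneg (hc : ∀ j ≤ N, 0 < c j)
    (hlc : ∀ j k, j ≤ k → k + 1 ≤ N → c j * c (k + 1) ≤ c (j + 1) * c k) {x : ℝ} (hx : 0 ≤ x) :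
    0 ≤ ∑ p ∈ range (N + 1) ×ˢ range (N + 1),
      curvatureWeight N (p.1 + p.2) p.1 * (c p.1 * c p.2) * x ^ (p.1 + p.2) := by
  rw [← sum_fiberwise_of_maps_to (g := fun p ↦ p.1 + p.2) (t := range (2 * N + 1))
    fun p hp ↦ by simp only [mem_product, mem_range] at hp ⊢; omega]
  refine sum_nonneg fun s _ ↦ ?_
  have hfiber : ∑ p ∈ range (N + 1) ×ˢ range (N + 1) with p.1 + p.2 = s,
        curvatureWeight N (p.1 + p.2) p.1 * (c p.1 * c p.2) * x ^ (p.1 + p.2)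
      = ∑ j ∈ Icc (s - N) (s - (s - N)), curvatureWeight N s j * (c j * c (s - j)) * x ^ s := by
    refine sum_nbij' (fun p ↦ p.1) (fun j ↦ (j, s - j)) ?_ ?_ ?_ ?_ ?_ <;>
      simp only [mem_filter, mem_product, mem_range, mem_Icc, Prod.forall, Prod.mk.injEq, true_and]
    · omega
    · omega
    · omega
    · simp
    · rintro j k ⟨-, rfl⟩
      rw [Nat.add_sub_cancel_left]
  rw [hfiber, ← sum_mul]
  exact mul_nonneg (sum_Icc_curvatureWeight_mul_nonneg hc hlc s) (pow_nonneg hx s)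

theorem powSum_pos (hc : ∀ j ≤ N, 0 < c j) {x : ℝ} (hx : 0 ≤ x) : 0 < powSum N c x :=
  sum_pos' (fun j hj ↦ mul_nonneg (hc j (by simp at hj; omega)).le (pow_nonneg hx j))
    ⟨0, by simp, by simpa using hc 0 (Nat.zero_le N)⟩

theorem convexOn_mul_pow_div_powSum (hc : ∀ j ≤ N, 0 < c j)
    (hlc : ∀ j k, j ≤ k → k + 1 ≤ N → c j * c (k + 1) ≤ c (j + 1) * c k) :
    ConvexOn ℝ (Set.Ici 0) fun x ↦ c N * x ^ (N + 1) / powSum N c x := by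
  refine convexOn_div_of_hasDerivAt (convex_Ici 0)
    (fun x ↦ (hasDerivAt_pow (N + 1) x).const_mul (c N))
    (fun x ↦ ((hasDerivAt_pow (N + 1 - 1) x).const_mul ((N + 1 : ℕ) : ℝ)).const_mul (c N))
    (fun x ↦ HasDerivAt.fun_sum fun j _ ↦ (hasDerivAt_pow j x).const_mul (c j))
    (fun x ↦ HasDerivAt.fun_sum fun j _ ↦
      ((hasDerivAt_pow (j - 1) x).const_mul (j : ℝ)).const_mul (c j))
    (fun x hx ↦ powSum_pos hc hx) fun x hx ↦ ?_
  rw [interior_Ici, Set.mem_Ioi] at hx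
  refine nonneg_of_mul_nonneg_right ?_ (pow_pos hx 2)
  have hQ' : x * ∑ j ∈ range (N + 1), c j * (j * x ^ (j - 1))
      = ∑ j ∈ range (N + 1), j * (c j * x ^ j) := by
    rw [mul_sum]; exact sum_congr rfl fun j _ ↦ mul_mul_natCast_mul_pow_sub_one _ _ _
  have hQ'' : x ^ 2 * ∑ j ∈ range (N + 1), c j * (j * ((j - 1 : ℕ) * x ^ (j - 1 - 1)))
      = ∑ j ∈ range (N + 1), j * (j - 1) * (c j * x ^ j) := by
    rw [mul_sum]; exact sum_congr rfl fun j _ ↦ sq_mul_mul_natCast_mul_pow_sub_two _ _ _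
  have hP' : x * (c N * ((N + 1 : ℕ) * x ^ (N + 1 - 1))) = (N + 1) * (c N * x ^ (N + 1)) := by
    rw [mul_mul_natCast_mul_pow_sub_one]; push_cast; ring
  have hP'' : x ^ 2 * (c N * ((N + 1 : ℕ) * ((N + 1 - 1 : ℕ) * x ^ (N + 1 - 1 - 1))))
      = N * (N + 1) * (c N * x ^ (N + 1)) := by
    rw [sq_mul_mul_natCast_mul_pow_sub_two]; push_cast; ring
  refine (mul_nonneg (mul_nonneg (hc N le_rfl).le (pow_nonneg hx.le (N + 1)))
    (sum_curvatureWeight_mul_pow_nonneg hc hlc hx.le)).trans_eq (Eq.symm ?_)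
  rw [sum_curvatureWeight_mul_pow_eq]
  -- multiply out, then substitute the Euler forms of `x P'`, `x^2 P''`, `x Q'` and `x^2 Q''`
  linear_combination powSum N c x ^ 2 * hP'' - c N * x ^ (N + 1) * powSum N c x * hQ''
    - 2 * powSum N c x * (x * (c N * ((N + 1 : ℕ) * x ^ (N + 1 - 1)))) * hQ'
    - 2 * powSum N c x * (∑ j ∈ range (N + 1), j * (c j * x ^ j)) * hP'
    + 2 * c N * x ^ (N + 1)
      * (x * ∑ j ∈ range (N + 1), c j * (j * x ^ (j - 1)) + ∑ j ∈ range (N + 1), j * (c j * x ^ j))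
      * hQ'

end LogConcave

noncomputable def queueCoef (m j : ℕ) : ℝ :=
  if j ≤ m then 1 / (j.factorial : ℝ) else 1 / ((m.factorial : ℝ) * (m : ℝ) ^ (j - m))

section Queue

variable {m : ℕ}

theorem aCoef_eq_queueCoef_mul_pow (j : ℕ) (r : ℝ) : aCoef m j r = queueCoef m j * r ^ j := by
  unfold aCoef queueCoef
  split_ifs with h
  · ring
  · rw [div_pow, div_mul_div_comm, ← pow_add, Nat.add_sub_cancel' (by omega)]
    ring

theorem mul_Bmn_eq (n : ℕ) (r : ℝ) :
    r * Bmn m n r = queueCoef m n * r ^ (n + 1) / powSum n (queueCoef m) r := by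
  simp only [Bmn, powSum, aCoef_eq_queueCoef_mul_pow, pow_succ]
  ring

variable (hm : 1 ≤ m)
include hm

theorem queueCoef_pos (j : ℕ) : 0 < queueCoef m j := by
  have : (0 : ℝ) < m := by exact_mod_cast hm
  unfold queueCoef
  split_ifs <;> positivity

theorem queueCoef_succ_mul (j : ℕ) :
    queueCoef m (j + 1) * (min (j + 1) m : ℕ) = queueCoef m j := by
  have hm0 : (m : ℝ) ≠ 0 := by positivity
  unfold queueCoef
  rcases le_or_gt (j + 1) m with h | h
  · rw [if_pos h, if_pos (by omega), min_eq_left h, Nat.factorial_succ]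
    push_cast
    field_simp
  · rw [if_neg (by omega), min_eq_right h.le]
    rcases le_or_gt j m with h' | h'
    · rw [if_pos h', show j = m by omega, Nat.add_sub_cancel_left, pow_one]
      field_simp
    · rw [if_neg (by omega), show j + 1 - m = j - m + 1 by omega, pow_succ]
      field_simp

theorem queueCoef_mul_le {j k : ℕ} (hjk : j ≤ k) :
    queueCoef m j * queueCoef m (k + 1) ≤ queueCoef m (j + 1) * queueCoef m k := by
  rw [← queueCoef_succ_mul hm j, ← queueCoef_succ_mul hm k]
  have : ((min (j + 1) m : ℕ) : ℝ) ≤ (min (k + 1) m : ℕ) := by gcongr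
  have := mul_pos (queueCoef_pos hm (j + 1)) (queueCoef_pos hm (k + 1))
  nlinarith

theorem convexOn_mul_Bmn (n : ℕ) : ConvexOn ℝ (Set.Ici 0) fun r ↦ r * Bmn m n r := by
  simp only [mul_Bmn_eq]
  exact convexOn_mul_pow_div_powSum (fun j _ ↦ queueCoef_pos hm j)
    fun j k hjk _ ↦ queueCoef_mul_le hm hjk

end Queue

theorem ConvexOn.le_sum_mul_map_div {ι : Type*} {s : Finset ι} {G : ℝ → ℝ}
    (hG : ConvexOn ℝ (Set.Ici 0) G) {μ w : ι → ℝ} (hs : s.Nonempty) (hμ : ∀ i ∈ s, 0 < μ i)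
    (hw : ∀ i ∈ s, 0 ≤ w i) :
    (∑ i ∈ s, μ i) * G ((∑ i ∈ s, w i) / ∑ i ∈ s, μ i) ≤ ∑ i ∈ s, μ i * G (w i / μ i) := by
  have hμs : 0 < ∑ i ∈ s, μ i := sum_pos hμ hs
  have h := hG.map_centerMass_le (fun i hi ↦ (hμ i hi).le) hμs
    fun i hi ↦ Set.mem_Ici.2 (div_nonneg (hw i hi) (hμ i hi).le)
  have hw_eq : ∑ i ∈ s, μ i * (w i / μ i) = ∑ i ∈ s, w i :=
    sum_congr rfl fun i hi ↦ mul_div_cancel₀ _ (hμ i hi).ne'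
  simp only [centerMass, smul_eq_mul, Function.comp_def, hw_eq] at h
  rw [inv_mul_eq_div] at h
  rwa [inv_mul_eq_div, le_div_iff₀ hμs, mul_comm] at h

theorem stmt_13_general (K : ℕ) (lam : ℝ) (hlam : 0 < lam)
    (m n : ℕ) (hm : 1 ≤ m) (μ : Fin K → ℝ) (hμ : ∀ k, 0 < μ k)
    (φ : Fin K → ℝ → ℝ) (hφ0 : ∀ k, φ k 0 = 0)
    (hφ : ∀ k, ∀ t : ℝ, 0 < t → φ k t = t * Bmn m n (t / μ k))
    -- `v` is the unique minimizer of the OBS nonlinear program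
    (v : Fin K → ℝ)
    (huniq : ∀ w : Fin K → ℝ, ((∀ k, w k ∈ Set.Icc (0 : ℝ) lam) ∧ ∑ k, w k = lam) →
      (∀ u : Fin K → ℝ, ((∀ k, u k ∈ Set.Icc (0 : ℝ) lam) ∧ ∑ k, u k = lam) →
        ∑ k, φ k (w k) ≤ ∑ k, φ k (u k)) → w = v) :
    ∀ x : ℕ, x < n → ∀ k l : Fin K,
      piIndex m n (v k / μ k) x = piIndex m n (v l / μ l) x := by
  intro x _ k₀ l
  have hK : (univ : Finset (Fin K)).Nonempty := ⟨k₀, mem_univ _⟩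
  set T := ∑ k, μ k
  have hT : 0 < T := sum_pos (fun k _ ↦ hμ k) hK
  have hφ_eq : ∀ k, ∀ t, 0 ≤ t → φ k t = μ k * (t / μ k * Bmn m n (t / μ k)) := by
    intro k t ht
    rcases ht.eq_or_lt with rfl | ht
    · simp [hφ0]
    · rw [hφ k t ht, ← mul_assoc, mul_div_cancel₀ _ (hμ k).ne']
  set w : Fin K → ℝ := fun k ↦ lam / T * μ k
  have hw_div : ∀ k, w k / μ k = lam / T := fun k ↦ mul_div_cancel_right₀ _ (hμ k).ne'
  have hw_sum : ∑ k, w k = lam := by rw [← mul_sum, div_mul_cancel₀ _ hT.ne']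
  have hw_nonneg : ∀ k, 0 ≤ w k := fun k ↦ mul_nonneg (div_nonneg hlam.le hT.le) (hμ k).le
  have hw_feas : (∀ k, w k ∈ Set.Icc 0 lam) ∧ ∑ k, w k = lam :=
    ⟨fun k ↦ ⟨hw_nonneg k, hw_sum ▸ single_le_sum (fun i _ ↦ hw_nonneg i) (mem_univ k)⟩, hw_sum⟩
  have hw_min : ∀ u : Fin K → ℝ, ((∀ k, u k ∈ Set.Icc 0 lam) ∧ ∑ k, u k = lam) →
      ∑ k, φ k (w k) ≤ ∑ k, φ k (u k) := by
    rintro u ⟨hu, hu_sum⟩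
    calc ∑ k, φ k (w k) = T * ((∑ k, u k) / T * Bmn m n ((∑ k, u k) / T)) := by
          simp only [hφ_eq _ _ (hw_nonneg _), hw_div, hu_sum, ← sum_mul]; rfl
      _ ≤ ∑ k, μ k * (u k / μ k * Bmn m n (u k / μ k)) :=
          (convexOn_mul_Bmn hm n).le_sum_mul_map_div hK (fun k _ ↦ hμ k) fun k _ ↦ (hu k).1
      _ = ∑ k, φ k (u k) := sum_congr rfl fun k _ ↦ (hφ_eq k _ (hu k).1).symm
  have hv : ∀ k, v k / μ k = lam / T := by
    rw [← huniq w hw_feas hw_min]; exact hw_div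
  rw [hv k₀, hv l]

/-- with equal buffer and server-pool sizes, the PI indices coincide across
queues, so the PI index policy reduces to shortest-queue routing. -/
theorem stmt_13 (K : ℕ) (hK : 1 ≤ K) (lam : ℝ) (hlam : 0 < lam)
    (m n : ℕ) (hm : 1 ≤ m) (hn : m < n) (μ : Fin K → ℝ) (hμ : ∀ k, 0 < μ k)
    (φ : Fin K → ℝ → ℝ) (hφ0 : ∀ k, φ k 0 = 0)
    (hφ : ∀ k, ∀ t : ℝ, 0 < t → φ k t = t * Bmn m n (t / μ k))
    -- `v` is the unique minimizer of the OBS nonlinear program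
    (v : Fin K → ℝ)
    (hfeas : (∀ k, v k ∈ Set.Icc (0 : ℝ) lam) ∧ ∑ k, v k = lam)
    (hmin : ∀ w : Fin K → ℝ, ((∀ k, w k ∈ Set.Icc (0 : ℝ) lam) ∧ ∑ k, w k = lam) →
      ∑ k, φ k (v k) ≤ ∑ k, φ k (w k))
    (huniq : ∀ w : Fin K → ℝ, ((∀ k, w k ∈ Set.Icc (0 : ℝ) lam) ∧ ∑ k, w k = lam) →
      (∀ u : Fin K → ℝ, ((∀ k, u k ∈ Set.Icc (0 : ℝ) lam) ∧ ∑ k, u k = lam) →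
        ∑ k, φ k (w k) ≤ ∑ k, φ k (u k)) → w = v) :
    ∀ x : ℕ, x < n → ∀ k l : Fin K,
      piIndex m n (v k / μ k) x = piIndex m n (v l / μ l) x :=
  stmt_13_general K lam hlam m n hm μ hμ φ hφ0 hφ v huniq
end

section
/- Let m ≥ 1 be an integer. The Erlang-B function r ↦ B_m(r) is differentiable on (0,∞), and for every r > 0 its derivative satisfies B_m'(r) = ((m − r + r·B_m(r))/r)·B_m(r). In particular, B_m'(m) = B_m(m)^2. -/
/-!
Write `B_m = N / S` with `N r = r^m / m!` and `S` the exponential series truncated after the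
term `N`. Then `N' = (m / r) N` and `S' = S - N`, so the quotient rule gives
`B_m' = (m / r) B_m - B_m (1 - B_m)`; at `r = m` the first two terms cancel.
-/

open Finset
open scoped Nat

lemma sum_range_pow_div_factorial_pos (n : ℕ) {r : ℝ} (hr : 0 ≤ r) :
    0 < ∑ j ∈ range (n + 1), r ^ j / (j ! : ℝ) := by
  rw [sum_range_succ']
  have : 0 ≤ ∑ j ∈ range n, r ^ (j + 1) / ((j + 1)! : ℝ) :=
    sum_nonneg fun j _ => by positivity
  simp only [pow_zero, Nat.factorial_zero, Nat.cast_one, div_one]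
  linarith

lemma hasDerivAt_sum_range_pow_div_factorial (n : ℕ) (r : ℝ) :
    HasDerivAt (fun x : ℝ => ∑ j ∈ range (n + 1), x ^ j / (j ! : ℝ))
      (∑ j ∈ range n, r ^ j / (j ! : ℝ)) r := by
  simp_rw [sum_range_succ' _ n, pow_zero, Nat.factorial_zero, Nat.cast_one, div_one]
  refine (HasDerivAt.fun_sum fun j _ => ?_).add_const 1
  refine ((hasDerivAt_pow (j + 1) r).div_const _).congr_deriv ?_
  rw [Nat.factorial_succ, Nat.add_sub_cancel]
  push_cast
  field_simp

theorem hasDerivAt_erlangB (m : ℕ) {r : ℝ} (hr : 0 < r) :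
    HasDerivAt (erlangB m) ((m - r + r * erlangB m r) / r * erlangB m r) r := by
  have hS := sum_range_pow_div_factorial_pos m hr.le
  have hpow : (m : ℝ) * r ^ (m - 1) = m / r * r ^ m := by
    rcases m with _ | k
    · simp
    · rw [Nat.add_sub_cancel, pow_succ]
      field_simp
  refine ((hasDerivAt_pow m r).div_const (m ! : ℝ) |>.fun_div
    (hasDerivAt_sum_range_pow_div_factorial m r) hS.ne').congr_deriv ?_
  unfold erlangB
  rw [sum_range_succ] at hS ⊢
  rw [hpow]
  field_simp
  ring

/-- derivative of the Erlang-B function. -/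
theorem stmt_16 (m : ℕ) (hm : 1 ≤ m) :
    (∀ r : ℝ, 0 < r → DifferentiableAt ℝ (erlangB m) r) ∧
    (∀ r : ℝ, 0 < r →
      deriv (erlangB m) r = (((m : ℝ) - r + r * erlangB m r) / r) * erlangB m r) ∧
    deriv (erlangB m) (m : ℝ) = (erlangB m (m : ℝ)) ^ 2 := by
  have hm₀ : (0 : ℝ) < m := by exact_mod_cast hm
  refine ⟨fun r hr => (hasDerivAt_erlangB m hr).differentiableAt,
    fun r hr => (hasDerivAt_erlangB m hr).deriv, ?_⟩
  rw [(hasDerivAt_erlangB m hm₀).deriv]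
  field_simp
  ring
end
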